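/- Let T : E → F be a positive linear operator that preserves disjointness (|T(x)| ∧ |T(y)| = 0 whenever x, y ∈ E satisfy |x| ∧ |y| = 0), and let S : G → F be a positive, order continuous linear operator with S(y) = T(y) for all y ∈ E. Then S preserves disjointness: for all x, y ∈ G with |x| ∧ |y| = 0 one has |S(x)| ∧ |S(y)| = 0. -/

import Mathlib

/-!
Write `a = |x|`, `b = |y|`. Since `E` is order dense and `G` is Archimedean, every `a ≥ 0` is the
supremum of the upward directed set `E ∩ [0, a]`, so `a - u ↓ 0` over `u ∈ E ∩ [0, a]`, and order
continuity gives `S (a - u) ↓ 0`, likewise `S (b - v) ↓ 0`. For such `u, v` the elements `S u = T u`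
and `S v = T v` are disjoint, so `S a ⊓ S b = (S u + S (a - u)) ⊓ (S v + S (b - v))` is at most
`S (a - u) + S (b - v)`, whence `S a ⊓ S b = 0`. Finally `|S x| ≤ S a` and `|S y| ≤ S b`.
-/

open Set Pointwise

section LatticeWithZero

variable {α : Type*} [Lattice α] [Zero α]

theorem SupClosed.inter_Icc {E : Set α} (hE : SupClosed E) (a : α) :
    SupClosed (E ∩ Icc 0 a) :=
  hE.inter fun _ hu _ hv => ⟨le_sup_of_le_left hu.1, sup_le hu.2 hv.2⟩

theorem inf_eq_zero_of_le_of_inf_eq_zero {u v a b : α} (hu : 0 ≤ u) (hv : 0 ≤ v)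
    (hua : u ≤ a) (hvb : v ≤ b) (hab : a ⊓ b = 0) : u ⊓ v = 0 :=
  le_antisymm (hab ▸ inf_le_inf hua hvb) (le_inf hu hv)

end LatticeWithZero

theorem abs_map_le_map_abs {G F : Type*} [Lattice G] [AddCommGroup G] [Lattice F]
    [AddCommGroup F] {f : G →+ F} (hf : Monotone f) (x : G) : |f x| ≤ f |x| :=
  abs_le'.2 ⟨hf (le_abs_self x), map_neg f x ▸ hf (neg_le_abs x)⟩

section LatticeOrderedGroup

variable {G : Type*} [Lattice G] [AddCommGroup G] [AddLeftMono G]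

theorem isLUB_inter_Icc_of_orderDense {E : Set G}
    (arch : ∀ x y : G, (∀ n : ℕ, n • x ≤ y) → x ≤ 0)
    (hE0 : (0 : G) ∈ E) (hEadd : ∀ x ∈ E, ∀ y ∈ E, x + y ∈ E)
    (hdense : ∀ x : G, 0 < x → ∃ y ∈ E, 0 < y ∧ y ≤ x) {a : G} (ha : 0 ≤ a) :
    IsLUB (E ∩ Icc 0 a) a := by
  refine ⟨fun u hu => hu.2.2, fun c hc => ?_⟩
  by_contra hac
  obtain ⟨y, hyE, hy0, hy⟩ := hdense _ (sub_pos.2 (inf_lt_left.2 hac))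
  -- Each multiple `n • y` lies below `a ⊓ c`, so adding `y ≤ a - a ⊓ c` keeps it below `a`.
  have hmul : ∀ n : ℕ, n • y ∈ E ∩ Icc 0 a := by
    intro n
    induction n with
    | zero => simpa using ⟨hE0, ha⟩
    | succ n ih =>
      rw [succ_nsmul]
      refine ⟨hEadd _ ih.1 _ hyE, add_nonneg ih.2.1 hy0.le, ?_⟩
      calc n • y + y ≤ a ⊓ c + (a - a ⊓ c) := add_le_add (le_inf ih.2.2 (hc ih)) hy
        _ = a := add_sub_cancel _ _
  exact hy0.not_ge (arch y a fun n => (hmul n).2.2)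

theorem SupClosed.directedOn_sub_image {s : Set G} (hs : SupClosed s) (a : G) :
    DirectedOn (· ≥ ·) ((a - ·) '' s) :=
  directedOn_image.2 <| hs.directedOn.mono fun _ _ h => sub_le_sub_left h a

theorem IsLUB.isGLB_sub_image {s : Set G} {a : G} (h : IsLUB s a) :
    IsGLB ((a - ·) '' s) 0 := by
  simpa [singleton_sub] using (isGLB_singleton (a := a)).sub h

theorem inf_add_le_of_inf_eq_zero {p q c d : G} (hpq : p ⊓ q = 0) (hc : 0 ≤ c) (hd : 0 ≤ d) :
    (p + c) ⊓ (q + d) ≤ c + d :=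
  calc (p + c) ⊓ (q + d) ≤ (p + (c + d)) ⊓ (q + (c + d)) :=
        inf_le_inf (add_le_add_right (le_add_of_nonneg_right hd) p)
          (add_le_add_right (le_add_of_nonneg_left hc) q)
    _ = p ⊓ q + (c + d) := (inf_add _ _ _).symm
    _ = c + d := by rw [hpq, zero_add]

variable {F : Type*} [Lattice F] [AddCommGroup F] [AddLeftMono F]

theorem monotone_of_map_nonneg {f : G →+ F} (hf : ∀ x, 0 ≤ x → 0 ≤ f x) : Monotone f :=
  fun x y h => sub_nonneg.1 (map_sub f y x ▸ hf _ (sub_nonneg.2 h))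

end LatticeOrderedGroup

theorem stmt18_general
    {G : Type*} [Lattice G] [AddCommGroup G] [Module ℝ G]
    [CovariantClass G G (· + ·) (· ≤ ·)]
    (arch : ∀ x y : G, (∀ n : ℕ, n • x ≤ y) → x ≤ 0)
    (E : Set G)
    (hE0 : (0 : G) ∈ E)
    (hEadd : ∀ x ∈ E, ∀ y ∈ E, x + y ∈ E)
    (hEsup : ∀ x ∈ E, ∀ y ∈ E, x ⊔ y ∈ E)
    (hdense : ∀ x : G, 0 < x → ∃ y ∈ E, 0 < y ∧ y ≤ x)
    {F : Type*} [ConditionallyCompleteLattice F] [AddCommGroup F] [Module ℝ F]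
    [CovariantClass F F (· + ·) (· ≤ ·)]
    (T : G → F)
    (hT_pos : ∀ x ∈ E, 0 ≤ x → 0 ≤ T x)
    (hT_disj : ∀ x ∈ E, ∀ y ∈ E, |x| ⊓ |y| = 0 → |T x| ⊓ |T y| = 0)
    (S : G →ₗ[ℝ] F)
    (hS_pos : ∀ x : G, 0 ≤ x → 0 ≤ S x)
    (hS_oc : ∀ D : Set G, D.Nonempty → DirectedOn (· ≥ ·) D → IsGLB D 0 →
      IsGLB (S '' D) 0)
    (hS_ext : ∀ y ∈ E, S y = T y) :
    ∀ x y : G, |x| ⊓ |y| = 0 → |S x| ⊓ |S y| = 0 := by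
  intro x y hxy
  have hS_tail : ∀ a : G, 0 ≤ a → IsGLB (S '' ((a - ·) '' (E ∩ Icc 0 a))) 0 := fun a ha =>
    hS_oc _ ⟨a - 0, 0, ⟨hE0, le_rfl, ha⟩, rfl⟩
      ((SupClosed.inter_Icc (fun u hu v hv => hEsup u hu v hv) a).directedOn_sub_image a)
      (isLUB_inter_Icc_of_orderDense arch hE0 hEadd hdense ha).isGLB_sub_image
  have hlb : S |x| ⊓ S |y| ∈ lowerBounds
      (S '' ((|x| - ·) '' (E ∩ Icc 0 |x|)) + S '' ((|y| - ·) '' (E ∩ Icc 0 |y|))) := by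
    rintro _ ⟨_, ⟨_, ⟨u, hu, rfl⟩, rfl⟩, _, ⟨_, ⟨v, hv, rfl⟩, rfl⟩, rfl⟩
    have hSuv : S u ⊓ S v = 0 := by
      have hTuv := hT_disj u hu.1 v hv.1 <| by
        rw [abs_of_nonneg hu.2.1, abs_of_nonneg hv.2.1]
        exact inf_eq_zero_of_le_of_inf_eq_zero hu.2.1 hv.2.1 hu.2.2 hv.2.2 hxy
      rwa [abs_of_nonneg (hT_pos u hu.1 hu.2.1), abs_of_nonneg (hT_pos v hv.1 hv.2.1),
        ← hS_ext u hu.1, ← hS_ext v hv.1] at hTuv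
    calc S |x| ⊓ S |y| = (S u + S (|x| - u)) ⊓ (S v + S (|y| - v)) := by
          simp only [map_sub, add_sub_cancel]
      _ ≤ S (|x| - u) + S (|y| - v) :=
        inf_add_le_of_inf_eq_zero hSuv (hS_pos _ (sub_nonneg.2 hu.2.2))
          (hS_pos _ (sub_nonneg.2 hv.2.2))
  have hSxy : S |x| ⊓ S |y| ≤ 0 := by
    simpa using ((hS_tail _ (abs_nonneg x)).add (hS_tail _ (abs_nonneg y))).2 hlb
  have hS_mono : Monotone S.toAddMonoidHom := monotone_of_map_nonneg hS_pos
  refine le_antisymm ?_ (le_inf (abs_nonneg _) (abs_nonneg _))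
  calc |S x| ⊓ |S y| ≤ S |x| ⊓ S |y| :=
        inf_le_inf (abs_map_le_map_abs hS_mono x) (abs_map_le_map_abs hS_mono y)
    _ ≤ 0 := hSxy

theorem stmt18
    {G : Type*} [Lattice G] [AddCommGroup G] [Module ℝ G]
    [CovariantClass G G (· + ·) (· ≤ ·)] [PosSMulMono ℝ G]
    (arch : ∀ x y : G, (∀ n : ℕ, n • x ≤ y) → x ≤ 0)
    (E : Set G)
    (hE0 : (0 : G) ∈ E)
    (hEadd : ∀ x ∈ E, ∀ y ∈ E, x + y ∈ E)
    (hEsmul : ∀ (c : ℝ), ∀ x ∈ E, c • x ∈ E)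
    (hEsup : ∀ x ∈ E, ∀ y ∈ E, x ⊔ y ∈ E)
    (hEinf : ∀ x ∈ E, ∀ y ∈ E, x ⊓ y ∈ E)
    (hdense : ∀ x : G, 0 < x → ∃ y ∈ E, 0 < y ∧ y ≤ x)
    (hmaj : ∀ x : G, ∃ y ∈ E, x ≤ y)
    {F : Type*} [ConditionallyCompleteLattice F] [AddCommGroup F] [Module ℝ F]
    [CovariantClass F F (· + ·) (· ≤ ·)] [PosSMulMono ℝ F]
    (T : G → F)
    (hT_add : ∀ x ∈ E, ∀ y ∈ E, T (x + y) = T x + T y)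
    (hT_smul : ∀ (c : ℝ), ∀ x ∈ E, T (c • x) = c • T x)
    (hT_pos : ∀ x ∈ E, 0 ≤ x → 0 ≤ T x)
    (hT_disj : ∀ x ∈ E, ∀ y ∈ E, |x| ⊓ |y| = 0 → |T x| ⊓ |T y| = 0)
    (S : G →ₗ[ℝ] F)
    (hS_pos : ∀ x : G, 0 ≤ x → 0 ≤ S x)
    (hS_oc : ∀ D : Set G, D.Nonempty → DirectedOn (· ≥ ·) D → IsGLB D 0 →
      IsGLB (S '' D) 0)
    (hS_ext : ∀ y ∈ E, S y = T y) :
    ∀ x y : G, |x| ⊓ |y| = 0 → |S x| ⊓ |S y| = 0 :=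
  stmt18_general arch E hE0 hEadd hEsup hdense T hT_pos hT_disj S hS_pos hS_oc hS_ext
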